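/- Let G = ⟨x, y | x¹⁰ = e, y² = x⁵, y⁻¹xy = x⁻¹⟩ be the generalized quaternion group of order 20, H = ⟨x²⟩ (of order 5), and S = {x², x⁻², y, y⁻¹, x⁸y, (x⁸y)⁻¹, x⁶y, (x⁶y)⁻¹, x, x⁻¹, x⁵}. Then S is an inverse-closed subset of G \ {e} and H is a (2,3)-regular set in Cay(G,S). -/

import Mathlib

/-- The Cayley graph of a group `G` with connection set `S`:
`x` is adjacent to `y` iff `y * x⁻¹ ∈ S` (symmetrized; for inverse-closed `S`
not containing `1` this is the usual Cayley graph). -/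
def cayley {G : Type*} [Group G] (S : Set G) : SimpleGraph G :=
  SimpleGraph.fromRel (fun x y => y * x⁻¹ ∈ S)

/-- `C` is an `(a,b)`-regular set in `Γ`: every vertex in `C` has exactly `a`
neighbors in `C`, and every vertex outside `C` has exactly `b` neighbors in `C`. -/
def IsRegularSet {V : Type*} (Γ : SimpleGraph V) (C : Set V) (a b : ℕ) : Prop :=
  (∀ v ∈ C, (Γ.neighborSet v ∩ C).ncard = a) ∧
  (∀ v ∉ C, (Γ.neighborSet v ∩ C).ncard = b)

/-!
In `cayley S` (with `S = S⁻¹`, `1 ∉ S`) the neighbours of `v` are the elements `s * v`, `s ∈ S`,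
so `v` has exactly `|{s ∈ S | s * v ∈ H}|` neighbours in a subgroup `H`; this number only depends
on the right coset `H v`. With `x = a 1`, `y = xa 0` and `H = ⟨x²⟩`, the connection set meets `H`
in `{x², x⁻²}` and each of the three other right cosets `H x`, `H y`, `H x y` in three elements.
-/

section CayleyGraph

variable {G : Type*} [Group G] {S : Set G}

lemma cayley_adj_iff (hS : S⁻¹ = S) (h1 : (1 : G) ∉ S) {x y : G} :
    (cayley S).Adj x y ↔ y * x⁻¹ ∈ S := by
  have hsymm : x * y⁻¹ ∈ S ↔ y * x⁻¹ ∈ S := by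
    rw [← Set.inv_mem_inv, hS, mul_inv_rev, inv_inv]
  simp only [cayley, SimpleGraph.fromRel_adj, hsymm, or_self, and_iff_right_iff_imp]
  rintro h rfl
  exact h1 (by simpa using h)

lemma ncard_cayley_neighborSet_inter (hS : S⁻¹ = S) (h1 : (1 : G) ∉ S) (v : G) (C : Set G) :
    ((cayley S).neighborSet v ∩ C).ncard = {s ∈ S | s * v ∈ C}.ncard := by
  have himage : (cayley S).neighborSet v ∩ C = (· * v) '' {s ∈ S | s * v ∈ C} := by
    ext w
    simp [cayley_adj_iff hS h1]
  rw [himage, Set.ncard_image_of_injective _ (mul_left_injective v)]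

theorem isRegularSet_cayley_subgroup_iff (hS : S⁻¹ = S) (h1 : (1 : G) ∉ S) (H : Subgroup G)
    (a b : ℕ) :
    IsRegularSet (cayley S) H a b ↔
      (S ∩ H).ncard = a ∧ ∀ v ∉ (H : Set G), {s ∈ S | s * v ∈ (H : Set G)}.ncard = b := by
  have hmem (v : G) (hv : v ∈ H) : {s ∈ S | s * v ∈ (H : Set G)} = S ∩ H := by
    ext s
    simp [H.mul_mem_cancel_right hv]
  simp only [IsRegularSet, ncard_cayley_neighborSet_inter hS h1]
  constructor
  · rintro ⟨hin, hout⟩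
    exact ⟨hmem 1 H.one_mem ▸ hin 1 H.one_mem, hout⟩
  · rintro ⟨hin, hout⟩
    exact ⟨fun v hv => hmem v hv ▸ hin, hout⟩

end CayleyGraph

open QuaternionGroup

lemma coe_zpowers_a_one_sq :
    (Subgroup.zpowers ((a 1 : QuaternionGroup 5) ^ 2) : Set (QuaternionGroup 5)) =
      ↑({a 0, a 2, a 4, a 6, a 8} : Finset (QuaternionGroup 5)) := by
  have horder : orderOf ((a 1 : QuaternionGroup 5) ^ 2) = 5 := by
    rw [orderOf_pow, orderOf_a_one]; rfl
  ext g
  rw [SetLike.mem_coe, (isOfFinOrder_of_finite _).mem_zpowers_iff_mem_range_orderOf, horder]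
  revert g
  decide

def connectionSet : Finset (QuaternionGroup 5) :=
  {a 1 ^ 2, (a 1 ^ 2)⁻¹, xa 0, (xa 0)⁻¹, a 1 ^ 8 * xa 0, (a 1 ^ 8 * xa 0)⁻¹,
    a 1 ^ 6 * xa 0, (a 1 ^ 6 * xa 0)⁻¹, a 1, (a 1)⁻¹, a 1 ^ 5}

lemma coe_connectionSet :
    (connectionSet : Set (QuaternionGroup 5)) =
      {a 1 ^ 2, (a 1 ^ 2)⁻¹, xa 0, (xa 0)⁻¹, a 1 ^ 8 * xa 0, (a 1 ^ 8 * xa 0)⁻¹,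
        a 1 ^ 6 * xa 0, (a 1 ^ 6 * xa 0)⁻¹, a 1, (a 1)⁻¹, a 1 ^ 5} := by
  ext
  simp [connectionSet]

lemma inv_coe_connectionSet :
    (connectionSet : Set (QuaternionGroup 5))⁻¹ = connectionSet := by
  ext g
  rw [Set.mem_inv, Finset.mem_coe, Finset.mem_coe]
  revert g
  decide

lemma one_notMem_coe_connectionSet : (1 : QuaternionGroup 5) ∉ (connectionSet : Set _) := by
  rw [Finset.mem_coe]
  decide

open QuaternionGroup in
theorem stmt18 :
    ((({a 1 ^ 2, (a 1 ^ 2)⁻¹, xa 0, (xa 0)⁻¹, a 1 ^ 8 * xa 0, (a 1 ^ 8 * xa 0)⁻¹,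
        a 1 ^ 6 * xa 0, (a 1 ^ 6 * xa 0)⁻¹, a 1, (a 1)⁻¹, a 1 ^ 5} :
          Set (QuaternionGroup 5)))⁻¹ =
      ({a 1 ^ 2, (a 1 ^ 2)⁻¹, xa 0, (xa 0)⁻¹, a 1 ^ 8 * xa 0, (a 1 ^ 8 * xa 0)⁻¹,
        a 1 ^ 6 * xa 0, (a 1 ^ 6 * xa 0)⁻¹, a 1, (a 1)⁻¹, a 1 ^ 5} :
          Set (QuaternionGroup 5))) ∧
    (1 : QuaternionGroup 5) ∉
      ({a 1 ^ 2, (a 1 ^ 2)⁻¹, xa 0, (xa 0)⁻¹, a 1 ^ 8 * xa 0, (a 1 ^ 8 * xa 0)⁻¹,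
        a 1 ^ 6 * xa 0, (a 1 ^ 6 * xa 0)⁻¹, a 1, (a 1)⁻¹, a 1 ^ 5} :
          Set (QuaternionGroup 5)) ∧
    IsRegularSet
      (cayley ({a 1 ^ 2, (a 1 ^ 2)⁻¹, xa 0, (xa 0)⁻¹, a 1 ^ 8 * xa 0,
          (a 1 ^ 8 * xa 0)⁻¹, a 1 ^ 6 * xa 0, (a 1 ^ 6 * xa 0)⁻¹, a 1, (a 1)⁻¹,
          a 1 ^ 5} : Set (QuaternionGroup 5)))
      (Subgroup.zpowers ((a 1 : QuaternionGroup 5) ^ 2) : Set (QuaternionGroup 5)) 2 3 := by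
  rw [← coe_connectionSet, isRegularSet_cayley_subgroup_iff inv_coe_connectionSet
    one_notMem_coe_connectionSet, coe_zpowers_a_one_sq]
  refine ⟨inv_coe_connectionSet, one_notMem_coe_connectionSet, ?_, ?_⟩
  · rw [← Finset.coe_inter, Set.ncard_coe_finset]
    decide
  · intro v hv
    simp only [Finset.mem_coe] at hv ⊢
    rw [← Finset.coe_filter, Set.ncard_coe_finset]
    revert v
    decide
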